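/- Let v_k : X → ℝ be continuous and u_k : X → ℝ continuous with u_k > 0 on a compact set X, for k = 1,…,K. Define F(x) = min_k v_k(x)/u_k(x) and, for μ ∈ ℝ, G(μ) = max_{x∈X} min_k (v_k(x) − μ u_k(x)). Then μ* = max_{x∈X} F(x) satisfies G(μ*) = 0, and conversely if G(μ) = 0 then μ = μ*. Moreover G is strictly decreasing in μ. -/

import Mathlib

/-!
At each point `x`, the sign of `min_k (v_k x - μ u_k x)` is the sign of `min_k v_k x / u_k x - μ`,
because the `u_k x` are positive. Hence at a maximiser `x₀` of `F` and `μ = F x₀`, every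
`min_k (v_k x - μ u_k x)` is `≤ 0` with equality at `x₀`, so `G μ = 0`. Each
`μ ↦ min_k (v_k x - μ u_k x)` is strictly decreasing, and a maximum over a compact set of
strictly decreasing continuous families is strictly decreasing; in particular the root of `G`
is unique.
-/

open Set

section FiniteInf

variable {ι α : Type*} [Finite ι] [Nonempty ι] [ConditionallyCompleteLinearOrder α]

theorem ciInf_le_iff_of_finite {f : ι → α} {a : α} : ⨅ i, f i ≤ a ↔ ∃ i, f i ≤ a := by
  refine ⟨fun h => ?_, fun ⟨i, hi⟩ => (ciInf_le (Finite.bddBelow_range f) i).trans hi⟩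
  obtain ⟨i, hi⟩ := exists_eq_ciInf_of_finite (f := f)
  exact ⟨i, hi ▸ h⟩

theorem strictAnti_ciInf_of_finite {β : Type*} [Preorder β] {f : ι → β → α}
    (hf : ∀ i, StrictAnti (f i)) : StrictAnti fun b => ⨅ i, f i b := by
  intro a b hab
  obtain ⟨i, hi⟩ := exists_eq_ciInf_of_finite (f := fun i => f i a)
  calc ⨅ j, f j b ≤ f i b := ciInf_le (Finite.bddBelow_range _) i
    _ < f i a := hf i hab
    _ = ⨅ j, f j a := hi

theorem continuousOn_ciInf_of_finite [TopologicalSpace α] [OrderTopology α]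
    {E : Type*} [TopologicalSpace E] {f : ι → E → α} {s : Set E}
    (hf : ∀ i, ContinuousOn (f i) s) : ContinuousOn (fun x => ⨅ i, f i x) s := by
  have := Fintype.ofFinite ι
  refine (ContinuousOn.finset_inf'_apply Finset.univ_nonempty fun i _ => hf i).congr
    fun x _ => ?_
  simp only [Finset.inf'_univ_eq_ciInf]

end FiniteInf

theorem IsCompact.strictAnti_sSup_image {α β E : Type*} [ConditionallyCompleteLinearOrder α]
    [TopologicalSpace α] [OrderTopology α] [Preorder β] [TopologicalSpace E]
    {φ : β → E → α} {X : Set E} (hX : IsCompact X) (hne : X.Nonempty)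
    (hφc : ∀ b, ContinuousOn (φ b) X) (hφ : ∀ x ∈ X, StrictAnti (φ · x)) :
    StrictAnti fun b => sSup (φ b '' X) := by
  intro a b hab
  obtain ⟨x, hx, hsup⟩ := hX.exists_sSup_image_eq hne (hφc b)
  dsimp only
  rw [hsup]
  exact (hφ x hx hab).trans_le
    (le_csSup (hX.image_of_continuousOn (hφc a)).bddAbove (mem_image_of_mem _ hx))

section Dinkelbach

variable {ι : Type*} [Finite ι] [Nonempty ι]

theorem iInf_sub_mul_nonneg_iff {v u : ι → ℝ} (hu : ∀ i, 0 < u i) (μ : ℝ) :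
    0 ≤ ⨅ i, (v i - μ * u i) ↔ μ ≤ ⨅ i, v i / u i := by
  simp only [le_ciInf_iff (Finite.bddBelow_range _), sub_nonneg, le_div_iff₀ (hu _)]

theorem iInf_sub_mul_nonpos_iff {v u : ι → ℝ} (hu : ∀ i, 0 < u i) (μ : ℝ) :
    ⨅ i, (v i - μ * u i) ≤ 0 ↔ ⨅ i, v i / u i ≤ μ := by
  simp only [ciInf_le_iff_of_finite, sub_nonpos, div_le_iff₀ (hu _)]

theorem strictAnti_iInf_sub_mul {v u : ι → ℝ} (hu : ∀ i, 0 < u i) :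
    StrictAnti fun μ : ℝ => ⨅ i, (v i - μ * u i) :=
  strictAnti_ciInf_of_finite fun i _ _ hab => sub_lt_sub_left (mul_lt_mul_of_pos_right hab (hu i)) _

theorem isGreatest_zero_iInf_sub_mul_image {E : Type*} {v u : ι → E → ℝ} {X : Set E} {x₀ : E}
    (hu : ∀ i, ∀ x ∈ X, 0 < u i x) (hx₀ : x₀ ∈ X) {μ : ℝ} (hμ : μ = ⨅ i, v i x₀ / u i x₀)
    (hmax : ∀ x ∈ X, ⨅ i, v i x / u i x ≤ μ) :
    IsGreatest ((fun x => ⨅ i, (v i x - μ * u i x)) '' X) 0 := by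
  refine ⟨⟨x₀, hx₀, le_antisymm ?_ ?_⟩, ?_⟩
  · exact (iInf_sub_mul_nonpos_iff (hu · x₀ hx₀) μ).2 (hmax x₀ hx₀)
  · exact (iInf_sub_mul_nonneg_iff (hu · x₀ hx₀) μ).2 hμ.le
  · rintro _ ⟨x, hx, rfl⟩
    exact (iInf_sub_mul_nonpos_iff (hu · x hx) μ).2 (hmax x hx)

end Dinkelbach

/-- Generalized Dinkelbach principle: for continuous `v_k` and continuous positive `u_k`
on a nonempty compact set `X`, with `F(x) = min_k v_k(x)/u_k(x)` and
`G(μ) = max_{x∈X} min_k (v_k(x) − μ u_k(x))`, the value `μ* = max_{x∈X} F(x)` is the unique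
root of `G`, and `G` is strictly decreasing. -/
theorem generalized_dinkelbach {E : Type*} [TopologicalSpace E] {K : ℕ} (hK : 0 < K)
    (X : Set E) (hX : IsCompact X) (hne : X.Nonempty)
    (v u : Fin K → E → ℝ)
    (hv : ∀ k, ContinuousOn (v k) X) (hu : ∀ k, ContinuousOn (u k) X)
    (hupos : ∀ k, ∀ x ∈ X, 0 < u k x)
    (F : E → ℝ) (hF : ∀ x, F x = ⨅ k, v k x / u k x)
    (G : ℝ → ℝ)
    (hG : ∀ μ', G μ' = sSup ((fun x => ⨅ k, (v k x - μ' * u k x)) '' X))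
    (μstar : ℝ) (hμ : μstar = sSup (F '' X)) :
    G μstar = 0 ∧ (∀ μ', G μ' = 0 → μ' = μstar) ∧ StrictAnti G := by
  have : Nonempty (Fin K) := ⟨⟨0, hK⟩⟩
  obtain rfl : F = fun x => ⨅ k, v k x / u k x := funext hF
  obtain rfl : G = fun μ => sSup ((fun x => ⨅ k, (v k x - μ * u k x)) '' X) := funext hG
  have hFc : ContinuousOn (fun x => ⨅ k, v k x / u k x) X :=
    continuousOn_ciInf_of_finite fun k => (hv k).div (hu k) fun x hx => (hupos k x hx).ne'
  obtain ⟨x₀, hx₀, hsup, hmax⟩ := hX.exists_sSup_image_eq_and_ge hne hFc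
  rw [hsup] at hμ
  have hG0 : sSup ((fun x => ⨅ k, (v k x - μstar * u k x)) '' X) = 0 :=
    (isGreatest_zero_iInf_sub_mul_image hupos hx₀ hμ (hμ ▸ hmax)).csSup_eq
  have hanti : StrictAnti fun μ => sSup ((fun x => ⨅ k, (v k x - μ * u k x)) '' X) :=
    hX.strictAnti_sSup_image hne
      (fun μ => continuousOn_ciInf_of_finite fun k => (hv k).sub (continuousOn_const.mul (hu k)))
      fun x hx => strictAnti_iInf_sub_mul (hupos · x hx)
  exact ⟨hG0, fun μ' h => hanti.injective (h.trans hG0.symm), hanti⟩
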